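/- Let S₁, S₂ be disjoint nonempty finite sets, S = S₁ ∪ S₂, let A be an (n,S₁)-expression, B an (n,S₂)-expression, C an (n,S)-expression, and suppose A□ᵢB ≤ C in the poset M̂ₙ(S). Then the following are equivalent: (1) C−S₂ = A and C−S₁ = B (the morphism A□ᵢB ≤ C is a strong (card S₁, card S₂)-shuffle); (2) there is no nontrivial factorization of the relation: there do not exist an (n,S₁)-expression X and an (n,S₂)-expression Y with (X,Y) ≠ (A,B), A ≤ X in M̂ₙ(S₁), B ≤ Y in M̂ₙ(S₂), and X□ᵢY ≤ C in M̂ₙ(S). -/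

import Mathlib

/-- Formal `(n, Fin k)`-expressions: binary trees whose leaves are labeled by
generators and whose internal nodes are labeled by one of the `n` operations.
Expressions are considered up to the strict associativity of each operation,
via the relation `W.equiv` below. -/
inductive W (n k : ℕ) : Type
  | leaf : Fin k → W n k
  | node : Fin n → W n k → W n k → W n k

namespace W

variable {n k : ℕ}

/-- The list of leaf labels, from left to right. -/
def leaves : W n k → List (Fin k)
  | leaf a => [a]
  | node _ A B => A.leaves ++ B.leaves

/-- `A.Exact T`: the expression `A` uses each element of `T` exactly once and
no other generators. -/
def Exact (A : W n k) (T : Finset (Fin k)) : Prop :=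
  A.leaves.Nodup ∧ A.leaves.toFinset = T

/-- `A.inRel a b i` means `a □ᵢ b` in `A`: the lowest common "ancestor" node of the
leaves `a` and `b` carries the operation `i`, with `a` to the left of `b`. -/
def inRel : W n k → Fin k → Fin k → Fin n → Prop
  | leaf _, _, _, _ => False
  | node j A B, a, b, i => A.inRel a b i ∨ B.inRel a b i ∨ (j = i ∧ a ∈ A.leaves ∧ b ∈ B.leaves)

/-- The order relation of the poset `M̂ₙ`: `A ≤ B` iff whenever `a □ᵢ b` in `A`,
either `a □ⱼ b` in `B` for some `j ≥ i`, or `b □ⱼ a` in `B` for some `j > i`. -/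
def le (A B : W n k) : Prop :=
  ∀ a b : Fin k, a ≠ b → ∀ i : Fin n, A.inRel a b i →
    ∃ j : Fin n, (i ≤ j ∧ B.inRel a b j) ∨ (i < j ∧ B.inRel b a j)

/-- One step of the associativity/congruence relation on expressions. -/
inductive Step : W n k → W n k → Prop
  | assoc (i : Fin n) (A B C : W n k) :
      Step (node i (node i A B) C) (node i A (node i B C))
  | congr_left (i : Fin n) {A A' : W n k} (B : W n k) :
      Step A A' → Step (node i A B) (node i A' B)
  | congr_right (i : Fin n) (A : W n k) {B B' : W n k} :
      Step B B' → Step (node i A B) (node i A B')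

/-- Equality of expressions (strict associativity of each operation). -/
def equiv (A B : W n k) : Prop := Relation.EqvGen Step A B

/-- Restriction of an expression to the leaves satisfying `p`
(`none` if no leaf survives). -/
def restrict : W n k → (Fin k → Bool) → Option (W n k)
  | leaf a, p => if p a then some (leaf a) else none
  | node i A B, p =>
    match A.restrict p, B.restrict p with
    | some A', some B' => some (node i A' B')
    | some A', none => some A'
    | none, o => o

end W

/-- Joining two possibly-empty expressions by the operation `i`, with the convention
that the empty expression is a unit. -/
def onode {n k : ℕ} (i : Fin n) : Option (W n k) → Option (W n k) → Option (W n k)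
  | some A, some B => some (W.node i A B)
  | some A, none => some A
  | none, o => o

/-- Equality of possibly-empty expressions. -/
def OEquiv {n k : ℕ} : Option (W n k) → Option (W n k) → Prop
  | none, none => True
  | some A, some B => A.equiv B
  | _, _ => False

/-- `A − T`: the expression `A` with the leaves belonging to `T` deleted. -/
def diffR {n k : ℕ} (A : W n k) (T : Finset (Fin k)) : Option (W n k) :=
  A.restrict fun a => decide (a ∉ T)

/-!
The restrictions `C ∩ S₁` and `C ∩ S₂` give the largest factorization: `A ≤ C ∩ S₁`,
`B ≤ C ∩ S₂`, `(C ∩ S₁) □ᵢ (C ∩ S₂) ≤ C`, and any `X □ᵢ Y ≤ C` has `X ≤ C ∩ S₁`, `Y ≤ C ∩ S₂`.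
The theorem thus reduces to antisymmetry of `≤`: expressions related both ways satisfy the same
relations `a □ₘ b`, and these relations determine an expression up to associativity, as one sees by
comparing right-bracketed normal forms.
-/

theorem List.exists_mem_mem_of_append_eq_append {α : Type*} {l₁ l₂ m₁ m₂ : List α}
    (h : l₁ ++ l₂ = m₁ ++ m₂) (hl₁ : l₁ ≠ []) (hl₂ : l₂ ≠ []) (hm₁ : m₁ ≠ []) (hm₂ : m₂ ≠ []) :
    (∃ a ∈ l₁, a ∈ m₁) ∧ ∃ b ∈ l₂, b ∈ m₂ := by
  have heads : ∀ {l l' m m' : List α}, l ++ l' = m ++ m' → l ≠ [] → m ≠ [] → ∃ a ∈ l, a ∈ m := by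
    intro l l' m m' h hl hm
    obtain ⟨x, l, rfl⟩ := List.exists_cons_of_ne_nil hl
    obtain ⟨y, m, rfl⟩ := List.exists_cons_of_ne_nil hm
    obtain ⟨rfl, -⟩ := List.cons_eq_cons.mp h
    exact ⟨x, List.mem_cons_self, List.mem_cons_self⟩
  refine ⟨heads h hl₁ hm₁, ?_⟩
  have h' : l₂.reverse ++ l₁.reverse = m₂.reverse ++ m₁.reverse := by
    simpa using congrArg List.reverse h
  simpa using heads h' (List.reverse_ne_nil_iff.mpr hl₂) (List.reverse_ne_nil_iff.mpr hm₂)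

theorem Relation.EqvGen.lift {α β : Type*} {r : α → α → Prop} {p : β → β → Prop} (f : α → β)
    (h : ∀ a b, r a b → p (f a) (f b)) {a b : α} (hab : Relation.EqvGen r a b) :
    Relation.EqvGen p (f a) (f b) := by
  induction hab with
  | rel x y hxy => exact .rel _ _ (h x y hxy)
  | refl x => exact .refl _
  | symm x y _ ih => exact .symm _ _ ih
  | trans x y z _ _ ih₁ ih₂ => exact .trans _ _ _ ih₁ ih₂

namespace W

variable {n k : ℕ}

theorem leaves_ne_nil : ∀ A : W n k, A.leaves ≠ []
  | leaf _ => List.cons_ne_nil _ _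
  | node _ A _ => by simp [leaves, leaves_ne_nil A]

theorem Exact.mem_iff {A : W n k} {T : Finset (Fin k)} (hA : A.Exact T) {a : Fin k} :
    a ∈ A.leaves ↔ a ∈ T := by
  rw [← hA.2, List.mem_toFinset]

theorem mem_leaves_of_inRel : ∀ {A : W n k} {a b : Fin k} {m : Fin n},
    A.inRel a b m → a ∈ A.leaves ∧ b ∈ A.leaves
  | leaf _, _, _, _, h => h.elim
  | node _ L R, _, _, _, h => by
    rcases h with h | h | ⟨-, ha, hb⟩
    · simp [leaves, mem_leaves_of_inRel h]
    · simp [leaves, mem_leaves_of_inRel h]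
    · simp [leaves, ha, hb]

theorem inRel_unique : ∀ {A : W n k} {a b : Fin k} {m m' : Fin n}, A.leaves.Nodup →
    A.inRel a b m → A.inRel a b m' → m = m'
  | leaf _, _, _, _, _, _, h, _ => h.elim
  | node _ L R, a, b, _, _, hnd, h, h' => by
    obtain ⟨hL, hR, hLR⟩ := List.nodup_append.mp hnd
    rcases h with h | h | ⟨rfl, ha, hb⟩ <;> rcases h' with h' | h' | ⟨rfl, ha', hb'⟩
    · exact inRel_unique hL h h'
    · exact absurd rfl (hLR a (mem_leaves_of_inRel h).1 a (mem_leaves_of_inRel h').1)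
    · exact absurd rfl (hLR b (mem_leaves_of_inRel h).2 b hb')
    · exact absurd rfl (hLR a (mem_leaves_of_inRel h').1 a (mem_leaves_of_inRel h).1)
    · exact inRel_unique hR h h'
    · exact absurd rfl (hLR a ha' a (mem_leaves_of_inRel h).1)
    · exact absurd rfl (hLR b (mem_leaves_of_inRel h').2 b hb)
    · exact absurd rfl (hLR a ha a (mem_leaves_of_inRel h').1)
    · rfl

theorem inRel_asymm : ∀ {A : W n k} {a b : Fin k} {m m' : Fin n}, A.leaves.Nodup →
    A.inRel a b m → ¬ A.inRel b a m'
  | leaf _, _, _, _, _, _, h, _ => h.elim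
  | node _ L R, a, b, _, _, hnd, h, h' => by
    obtain ⟨hL, hR, hLR⟩ := List.nodup_append.mp hnd
    rcases h with h | h | ⟨-, ha, hb⟩ <;> rcases h' with h' | h' | ⟨-, hb', ha'⟩
    · exact inRel_asymm hL h h'
    · exact hLR a (mem_leaves_of_inRel h).1 a (mem_leaves_of_inRel h').2 rfl
    · exact hLR a (mem_leaves_of_inRel h).1 a ha' rfl
    · exact hLR b (mem_leaves_of_inRel h').1 b (mem_leaves_of_inRel h).2 rfl
    · exact inRel_asymm hR h h'
    · exact hLR b hb' b (mem_leaves_of_inRel h).2 rfl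
    · exact hLR b (mem_leaves_of_inRel h').1 b hb rfl
    · exact hLR a ha a (mem_leaves_of_inRel h').2 rfl
    · exact hLR a ha a ha' rfl

theorem ne_of_inRel {A : W n k} {a b : Fin k} {m : Fin n} (hnd : A.leaves.Nodup)
    (h : A.inRel a b m) : a ≠ b := by
  rintro rfl
  exact inRel_asymm hnd h h

theorem inRel_left_iff {i : Fin n} {L R : W n k} (hnd : (node i L R).leaves.Nodup)
    {a b : Fin k} {m : Fin n} :
    L.inRel a b m ↔ a ∈ L.leaves ∧ b ∈ L.leaves ∧ (node i L R).inRel a b m := by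
  obtain ⟨-, -, hLR⟩ := List.nodup_append.mp hnd
  refine ⟨fun h => ⟨(mem_leaves_of_inRel h).1, (mem_leaves_of_inRel h).2, .inl h⟩, ?_⟩
  rintro ⟨ha, hb, h | h | ⟨-, -, hb'⟩⟩
  · exact h
  · exact absurd rfl (hLR a ha a (mem_leaves_of_inRel h).1)
  · exact absurd rfl (hLR b hb b hb')

theorem inRel_right_iff {i : Fin n} {L R : W n k} (hnd : (node i L R).leaves.Nodup)
    {a b : Fin k} {m : Fin n} :
    R.inRel a b m ↔ a ∈ R.leaves ∧ b ∈ R.leaves ∧ (node i L R).inRel a b m := by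
  obtain ⟨-, -, hLR⟩ := List.nodup_append.mp hnd
  refine ⟨fun h => ⟨(mem_leaves_of_inRel h).1, (mem_leaves_of_inRel h).2, .inr (.inl h)⟩, ?_⟩
  rintro ⟨ha, hb, h | h | ⟨-, ha', -⟩⟩
  · exact absurd rfl (hLR a (mem_leaves_of_inRel h).1 a ha)
  · exact h
  · exact absurd rfl (hLR a ha' a ha)

theorem pairwise_leaves : ∀ A : W n k, A.leaves.Pairwise fun a b => ∃ m, A.inRel a b m
  | leaf _ => List.pairwise_singleton _ _
  | node i L R => List.pairwise_append.mpr
      ⟨(pairwise_leaves L).imp fun ⟨m, h⟩ => ⟨m, .inl h⟩,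
       (pairwise_leaves R).imp fun ⟨m, h⟩ => ⟨m, .inr (.inl h)⟩,
       fun _ ha _ hb => ⟨i, .inr (.inr ⟨rfl, ha, hb⟩)⟩⟩

/-- Both lists of leaves are sorted by the common relation "`a □ₘ b` for some `m`". -/
theorem leaves_eq_of_inRel_eq {A B : W n k} {T : Finset (Fin k)} (hA : A.Exact T)
    (hB : B.Exact T) (h : A.inRel = B.inRel) : A.leaves = B.leaves :=
  ((List.perm_ext_iff_of_nodup hA.1 hB.1).mpr fun _ => hA.mem_iff.trans hB.mem_iff.symm)
    |>.eq_of_pairwise (fun _ _ _ _ ⟨_, hab⟩ ⟨_, hba⟩ => (inRel_asymm hA.1 hab hba).elim)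
    (pairwise_leaves A) (h ▸ pairwise_leaves B)

theorem equiv.eq_of_step {β : Type*} {f : W n k → β} (hf : ∀ A B, Step A B → f A = f B)
    {A B : W n k} (h : A.equiv B) : f A = f B :=
  (InvImage.equivalence _ f eq_equivalence).eqvGen_iff.mp (Relation.EqvGen.mono hf _ _ h)

theorem Step.leaves_eq {A B : W n k} (h : Step A B) : A.leaves = B.leaves := by
  induction h with
  | assoc => simp [leaves]
  | congr_left _ _ _ ih => simp [leaves, ih]
  | congr_right _ _ _ ih => simp [leaves, ih]

theorem Step.inRel_eq {A B : W n k} (h : Step A B) : A.inRel = B.inRel := by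
  induction h with
  | assoc =>
    ext a b m
    simp only [inRel, leaves, List.mem_append]
    tauto
  | congr_left _ _ hs ih => ext; simp only [inRel, ih, hs.leaves_eq]
  | congr_right _ _ hs ih => ext; simp only [inRel, ih, hs.leaves_eq]

theorem equiv.leaves_eq {A B : W n k} (h : A.equiv B) : A.leaves = B.leaves :=
  h.eq_of_step fun _ _ => Step.leaves_eq

theorem equiv.inRel_eq {A B : W n k} (h : A.equiv B) : A.inRel = B.inRel :=
  h.eq_of_step fun _ _ => Step.inRel_eq

theorem equiv.node_congr {i : Fin n} {A A' B B' : W n k} (hA : A.equiv A') (hB : B.equiv B') :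
    (node i A B).equiv (node i A' B') :=
  .trans _ _ _ (hA.lift (node i · B) fun _ _ => Step.congr_left i B)
    (hB.lift (node i A') fun _ _ => Step.congr_right i A')

def label : W n k → Option (Fin n)
  | leaf _ => none
  | node i _ _ => some i

/-- Normal form for associativity: every chain of one operation is bracketed to the right. -/
def IsRightAssoc : W n k → Prop
  | leaf _ => True
  | node i L R => L.label ≠ some i ∧ L.IsRightAssoc ∧ R.IsRightAssoc

def assocNode (i : Fin n) : W n k → W n k → W n k
  | leaf a, R => node i (leaf a) R
  | node j L₁ L₂, R => if j = i then node i L₁ (assocNode i L₂ R) else node i (node j L₁ L₂) R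

def rightAssoc : W n k → W n k
  | leaf a => leaf a
  | node i L R => assocNode i (rightAssoc L) (rightAssoc R)

theorem assocNode_equiv (i : Fin n) : ∀ L R : W n k, (assocNode i L R).equiv (node i L R)
  | leaf _, _ => .refl _
  | node j L₁ L₂, R => by
    unfold assocNode
    split_ifs with hj
    · subst hj
      exact .trans _ _ _ (equiv.node_congr (.refl _) (assocNode_equiv j L₂ R))
        (.symm _ _ (.rel _ _ (.assoc j L₁ L₂ R)))
    · exact .refl _

theorem isRightAssoc_assocNode (i : Fin n) :
    ∀ {L R : W n k}, L.IsRightAssoc → R.IsRightAssoc → (assocNode i L R).IsRightAssoc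
  | leaf _, _, _, hR => ⟨nofun, trivial, hR⟩
  | node j L₁ L₂, _, ⟨h₁, hL₁, hL₂⟩, hR => by
    unfold assocNode
    split_ifs with hj
    · subst hj
      exact ⟨h₁, hL₁, isRightAssoc_assocNode j hL₂ hR⟩
    · exact ⟨by simpa [label] using hj, ⟨h₁, hL₁, hL₂⟩, hR⟩

theorem rightAssoc_equiv : ∀ A : W n k, (rightAssoc A).equiv A
  | leaf _ => .refl _
  | node i L R =>
    .trans _ _ _ (assocNode_equiv i _ _)
      (equiv.node_congr (rightAssoc_equiv L) (rightAssoc_equiv R))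

theorem isRightAssoc_rightAssoc : ∀ A : W n k, (rightAssoc A).IsRightAssoc
  | leaf _ => trivial
  | node i L R => isRightAssoc_assocNode i (isRightAssoc_rightAssoc L) (isRightAssoc_rightAssoc R)

theorem label_eq_of_leaves_eq {i j : Fin n} {A₁ A₂ B₁ B₂ : W n k}
    (hnd : (node i A₁ A₂).leaves.Nodup) (hl : A₁.leaves ++ A₂.leaves = B₁.leaves ++ B₂.leaves)
    (hr : (node i A₁ A₂).inRel = (node j B₁ B₂).inRel) : i = j := by
  obtain ⟨⟨a, haA, haB⟩, ⟨b, hbA, hbB⟩⟩ := List.exists_mem_mem_of_append_eq_append hl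
    (leaves_ne_nil A₁) (leaves_ne_nil A₂) (leaves_ne_nil B₁) (leaves_ne_nil B₂)
  exact inRel_unique hnd (.inr (.inr ⟨rfl, haA, hbA⟩)) (hr ▸ .inr (.inr ⟨rfl, haB, hbB⟩))

/-- If `B₁` were longer than `A₁`, its first leaf would lie in `A₁` and its last in `A₂`, so the
root of `B₁` would carry `i`. -/
theorem length_leaves_left_le {i : Fin n} {A₁ A₂ B₁ B₂ : W n k}
    (hnd : (node i A₁ A₂).leaves.Nodup) (hB : (node i B₁ B₂).IsRightAssoc)
    (hl : A₁.leaves ++ A₂.leaves = B₁.leaves ++ B₂.leaves)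
    (hr : (node i A₁ A₂).inRel = (node i B₁ B₂).inRel) :
    B₁.leaves.length ≤ A₁.leaves.length := by
  by_contra! hlt
  obtain ⟨r, hB₁, hA₂⟩ : ∃ r, B₁.leaves = A₁.leaves ++ r ∧ A₂.leaves = r ++ B₂.leaves := by
    rcases List.append_eq_append_iff.mp hl with h | ⟨r, hA₁, -⟩
    · exact h
    · simp [hA₁] at hlt
  have hr₀ : r ≠ [] := by
    rintro rfl
    simp [hB₁] at hlt
  cases B₁ with
  | leaf x => simp [leaves, List.singleton_eq_append_iff, leaves_ne_nil, hr₀] at hB₁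
  | node j P Q =>
    obtain ⟨⟨a, haP, haA⟩, ⟨b, hbQ, hbr⟩⟩ := List.exists_mem_mem_of_append_eq_append hB₁
      (leaves_ne_nil P) (leaves_ne_nil Q) (leaves_ne_nil A₁) hr₀
    have hij : i = j := inRel_unique hnd (.inr (.inr ⟨rfl, haA, hA₂ ▸ List.mem_append_left _ hbr⟩))
      (hr ▸ .inl (.inr (.inr ⟨rfl, haP, hbQ⟩)))
    exact hB.1 (hij ▸ rfl)

theorem eq_of_isRightAssoc : ∀ {A B : W n k}, A.IsRightAssoc → B.IsRightAssoc →
    A.leaves.Nodup → A.leaves = B.leaves → A.inRel = B.inRel → A = B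
  | leaf _, leaf _, _, _, _, hl, _ => by simpa [leaves] using hl
  | leaf _, node _ B₁ B₂, _, _, _, hl, _ => by
    simp [leaves, List.singleton_eq_append_iff, leaves_ne_nil] at hl
  | node _ A₁ A₂, leaf _, _, _, _, hl, _ => by
    simp [leaves, List.append_eq_singleton_iff, leaves_ne_nil] at hl
  | node i A₁ A₂, node j B₁ B₂, hA, hB, hnd, hl, hr => by
    obtain rfl := label_eq_of_leaves_eq hnd hl hr
    have hnd' : (node i B₁ B₂).leaves.Nodup := hl ▸ hnd
    obtain ⟨e₁, e₂⟩ := List.append_inj hl <| le_antisymm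
      (length_leaves_left_le hnd' hA hl.symm hr.symm) (length_leaves_left_le hnd hB hl hr)
    have hr₁ : A₁.inRel = B₁.inRel := by
      ext a b m
      rw [inRel_left_iff hnd, inRel_left_iff hnd', e₁, hr]
    have hr₂ : A₂.inRel = B₂.inRel := by
      ext a b m
      rw [inRel_right_iff hnd, inRel_right_iff hnd', e₂, hr]
    have hnd₁ := (List.nodup_append.mp hnd).1
    have hnd₂ := (List.nodup_append.mp hnd).2.1
    rw [eq_of_isRightAssoc hA.2.1 hB.2.1 hnd₁ e₁ hr₁, eq_of_isRightAssoc hA.2.2 hB.2.2 hnd₂ e₂ hr₂]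

theorem equiv_of_inRel_eq {A B : W n k} {T : Finset (Fin k)} (hA : A.Exact T) (hB : B.Exact T)
    (h : A.inRel = B.inRel) : A.equiv B := by
  have hA' := rightAssoc_equiv A
  have hB' := rightAssoc_equiv B
  have e : rightAssoc A = rightAssoc B :=
    eq_of_isRightAssoc (isRightAssoc_rightAssoc A) (isRightAssoc_rightAssoc B)
      (hA'.leaves_eq ▸ hA.1)
      (by rw [hA'.leaves_eq, hB'.leaves_eq, leaves_eq_of_inRel_eq hA hB h])
      (by rw [hA'.inRel_eq, hB'.inRel_eq, h])
  exact .trans _ _ _ (.symm _ _ hA') (e ▸ hB')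

section Restrict

variable {p : Fin k → Bool}

theorem elim_restrict : ∀ A : W n k, (A.restrict p).elim [] leaves = A.leaves.filter p
  | leaf a => by by_cases h : p a <;> simp [restrict, leaves, h]
  | node i L R => by
    rw [leaves, List.filter_append, ← elim_restrict L, ← elim_restrict R]
    cases hL : L.restrict p <;> cases hR : R.restrict p <;> simp [restrict, hL, hR, leaves]

theorem leaves_of_restrict_eq_some {A A' : W n k} (h : A.restrict p = some A') :
    A'.leaves = A.leaves.filter p := by
  simpa [h] using elim_restrict (p := p) A

theorem notMem_leaves_of_restrict_eq_none {A : W n k} (h : A.restrict p = none) {a : Fin k}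
    (ha : p a) : a ∉ A.leaves := by
  simpa [h, List.filter_eq_nil_iff, ha] using congrArg (a ∈ ·) (elim_restrict (p := p) A)

theorem exists_restrict_eq_some {A : W n k} {a : Fin k} (ha : a ∈ A.leaves) (hpa : p a) :
    ∃ A', A.restrict p = some A' := by
  cases h : A.restrict p with
  | none => exact (notMem_leaves_of_restrict_eq_none h hpa ha).elim
  | some A' => exact ⟨A', rfl⟩

theorem inRel_restrict : ∀ {A A' : W n k}, A.restrict p = some A' → ∀ {a b : Fin k} {m : Fin n},
    p a → p b → (A'.inRel a b m ↔ A.inRel a b m)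
  | leaf x, A', h, a, b, m, _, _ => by
    by_cases hx : p x <;> simp [restrict, hx] at h
    simp [← h, inRel]
  | node i L R, A', h, a, b, m, hpa, hpb => by
    cases hL : L.restrict p with
    | none =>
      have hR : R.restrict p = some A' := by simpa [restrict, hL] using h
      have haL := notMem_leaves_of_restrict_eq_none hL hpa
      have hL' : ¬ L.inRel a b m := fun h => haL (mem_leaves_of_inRel h).1
      simp [inRel, inRel_restrict hR hpa hpb, haL, hL']
    | some L' =>
      cases hR : R.restrict p with
      | none =>
        have hA' : A' = L' := by simpa [restrict, hL, hR] using h.symm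
        have hbR := notMem_leaves_of_restrict_eq_none hR hpb
        have hR' : ¬ R.inRel a b m := fun h => hbR (mem_leaves_of_inRel h).2
        subst hA'
        simp [inRel, inRel_restrict hL hpa hpb, hbR, hR']
      | some R' =>
        have hA' : A' = node i L' R' := by simpa [restrict, hL, hR] using h.symm
        subst hA'
        simp [inRel, inRel_restrict hL hpa hpb, inRel_restrict hR hpa hpb,
          leaves_of_restrict_eq_some hL, leaves_of_restrict_eq_some hR, hpa, hpb]

theorem le_restrict {A C C' : W n k} (h : A.le C) (hp : ∀ a ∈ A.leaves, p a)
    (hC : C.restrict p = some C') : A.le C' := by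
  intro a b hab m hm
  have hpa := hp a (mem_leaves_of_inRel hm).1
  have hpb := hp b (mem_leaves_of_inRel hm).2
  simpa only [inRel_restrict hC hpa hpb, inRel_restrict hC hpb hpa] using h a b hab m hm

theorem restrict_le {C C' : W n k} (hC : C.restrict p = some C') : C'.le C := by
  intro a b _ m hm
  obtain ⟨ha, hb⟩ := mem_leaves_of_inRel hm
  rw [leaves_of_restrict_eq_some hC, List.mem_filter] at ha hb
  exact ⟨m, .inl ⟨le_rfl, (inRel_restrict hC ha.2 hb.2).mp hm⟩⟩

theorem Exact.exists_restrict {C : W n k} {S T : Finset (Fin k)} (hC : C.Exact T) (hST : S ⊆ T)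
    (hS : S.Nonempty) : ∃ C', C.restrict (fun a => decide (a ∈ S)) = some C' ∧ C'.Exact S := by
  obtain ⟨x, hx⟩ := hS
  obtain ⟨C', hC'⟩ := exists_restrict_eq_some (p := fun a => decide (a ∈ S))
    (hC.mem_iff.mpr (hST hx)) (decide_eq_true hx)
  have hl := leaves_of_restrict_eq_some hC'
  refine ⟨C', hC', hl ▸ hC.1.filter _, ?_⟩
  ext a
  simpa [hl, hC.mem_iff] using fun h => hST h

end Restrict

theorem le.trans_equiv {A B B' : W n k} (h : A.le B) (hB : B.equiv B') : A.le B' := by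
  simpa only [le, hB.inRel_eq] using h

theorem le_of_node_le_left {i : Fin n} {A B C : W n k} (h : (node i A B).le C) : A.le C :=
  fun a b hab m hm => h a b hab m (.inl hm)

theorem le_of_node_le_right {i : Fin n} {A B C : W n k} (h : (node i A B).le C) : B.le C :=
  fun a b hab m hm => h a b hab m (.inr (.inl hm))

theorem node_le_of_subset {i : Fin n} {A B C X Y : W n k} (h : (node i A B).le C) (hX : X.le C)
    (hY : Y.le C) (hXA : X.leaves ⊆ A.leaves) (hYB : Y.leaves ⊆ B.leaves) : (node i X Y).le C := by
  rintro a b hab m (hm | hm | ⟨rfl, ha, hb⟩)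
  · exact hX a b hab _ hm
  · exact hY a b hab _ hm
  · exact h a b hab _ (.inr (.inr ⟨rfl, hXA ha, hYB hb⟩))

theorem inRel_of_le_of_le {A B : W n k} (hnd : A.leaves.Nodup) (hAB : A.le B) (hBA : B.le A)
    {a b : Fin k} {m : Fin n} (h : A.inRel a b m) : B.inRel a b m := by
  have hab := ne_of_inRel hnd h
  obtain ⟨j, ⟨hmj, hj⟩ | ⟨hmj, hj⟩⟩ := hAB a b hab m h
  · obtain ⟨l, ⟨hjl, hl⟩ | ⟨-, hl⟩⟩ := hBA a b hab j hj
    · obtain rfl := inRel_unique hnd h hl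
      exact le_antisymm hmj hjl ▸ hj
    · exact (inRel_asymm hnd h hl).elim
  · obtain ⟨l, ⟨-, hl⟩ | ⟨hjl, hl⟩⟩ := hBA b a hab.symm j hj
    · exact (inRel_asymm hnd h hl).elim
    · obtain rfl := inRel_unique hnd h hl
      exact (lt_asymm hmj hjl).elim

theorem equiv_of_le_of_le {A B : W n k} {T : Finset (Fin k)} (hA : A.Exact T) (hB : B.Exact T)
    (hAB : A.le B) (hBA : B.le A) : A.equiv B := by
  refine equiv_of_inRel_eq hA hB ?_
  ext a b m
  exact ⟨inRel_of_le_of_le hA.1 hAB hBA, inRel_of_le_of_le hB.1 hBA hAB⟩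

end W

theorem strong_shuffle_iff_no_factorization_general (n k : ℕ)
    (S₁ S₂ : Finset (Fin k)) (h₁ : S₁.Nonempty) (h₂ : S₂.Nonempty)
    (A B C : W n k) (hA : A.Exact S₁) (hB : B.Exact S₂) (hC : C.Exact (S₁ ∪ S₂))
    (i : Fin n) (hle : (W.node i A B).le C) :
    ((∃ CA, C.restrict (fun a => decide (a ∈ S₁)) = some CA ∧ CA.equiv A) ∧
     (∃ CB, C.restrict (fun a => decide (a ∈ S₂)) = some CB ∧ CB.equiv B)) ↔
    ¬ ∃ X Y : W n k, X.Exact S₁ ∧ Y.Exact S₂ ∧ ¬ (X.equiv A ∧ Y.equiv B) ∧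
        A.le X ∧ B.le Y ∧ (W.node i X Y).le C := by
  obtain ⟨CA, hCA, hCA_ex⟩ := hC.exists_restrict Finset.subset_union_left h₁
  obtain ⟨CB, hCB, hCB_ex⟩ := hC.exists_restrict Finset.subset_union_right h₂
  have le_CA : ∀ {X Y : W n k}, X.Exact S₁ → (W.node i X Y).le C → X.le CA := fun hX hXY =>
    W.le_restrict (W.le_of_node_le_left hXY) (by simpa using fun a => hX.mem_iff.mp) hCA
  have le_CB : ∀ {X Y : W n k}, Y.Exact S₂ → (W.node i X Y).le C → Y.le CB := fun hY hXY =>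
    W.le_restrict (W.le_of_node_le_right hXY) (by simpa using fun a => hY.mem_iff.mp) hCB
  constructor
  · rintro ⟨⟨_, hCA', hCA_A⟩, ⟨_, hCB', hCB_B⟩⟩ ⟨X, Y, hX, hY, hne, hAX, hBY, hXY⟩
    cases hCA.symm.trans hCA'
    cases hCB.symm.trans hCB'
    exact hne ⟨W.equiv_of_le_of_le hX hA ((le_CA hX hXY).trans_equiv hCA_A) hAX,
      W.equiv_of_le_of_le hY hB ((le_CB hY hXY).trans_equiv hCB_B) hBY⟩
  · intro hno
    have hC_node : (W.node i CA CB).le C :=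
      W.node_le_of_subset hle (W.restrict_le hCA) (W.restrict_le hCB)
        (fun _ h => hA.mem_iff.mpr (hCA_ex.mem_iff.mp h))
        (fun _ h => hB.mem_iff.mpr (hCB_ex.mem_iff.mp h))
    obtain ⟨hCA_A, hCB_B⟩ : CA.equiv A ∧ CB.equiv B := not_not.mp fun hne =>
      hno ⟨CA, CB, hCA_ex, hCB_ex, hne, le_CA hA hle, le_CB hB hle, hC_node⟩
    exact ⟨⟨CA, hCA, hCA_A⟩, ⟨CB, hCB, hCB_B⟩⟩

/-- STATEMENT 14: for a morphism `A □ᵢ B ≤ C` in `M̂ₙ(S)` (with `S = S₁ ⊔ S₂`,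
`A` supported on `S₁`, `B` on `S₂`), being a strong shuffle (`C−S₂ = A` and
`C−S₁ = B`) is equivalent to admitting no nontrivial factorization through some
`X □ᵢ Y` with `A ≤ X`, `B ≤ Y`. -/
theorem strong_shuffle_iff_no_factorization (n k : ℕ) (hn : 1 ≤ n)
    (S₁ S₂ : Finset (Fin k)) (h₁ : S₁.Nonempty) (h₂ : S₂.Nonempty) (hd : Disjoint S₁ S₂)
    (A B C : W n k) (hA : A.Exact S₁) (hB : B.Exact S₂) (hC : C.Exact (S₁ ∪ S₂))
    (i : Fin n) (hle : (W.node i A B).le C) :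
    ((∃ CA, C.restrict (fun a => decide (a ∈ S₁)) = some CA ∧ CA.equiv A) ∧
     (∃ CB, C.restrict (fun a => decide (a ∈ S₂)) = some CB ∧ CB.equiv B)) ↔
    ¬ ∃ X Y : W n k, X.Exact S₁ ∧ Y.Exact S₂ ∧ ¬ (X.equiv A ∧ Y.equiv B) ∧
        A.le X ∧ B.le Y ∧ (W.node i X Y).le C :=
  strong_shuffle_iff_no_factorization_general n k S₁ S₂ h₁ h₂ A B C hA hB hC i hle
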